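/- arXiv:1301.0692 — 4 statements merged into one kernel-verified Lean document; each statement's English description precedes it below -/
import Mathlib

section
/- A linear map Λ: M_n(ℂ) → M_n(ℂ) is completely positive if and only if its Choi matrix C_Λ = (id_n ⊗ Λ)[P⁺_n] is positive semidefinite (Choi's theorem). -/
/-!
Write `ω = ∑ᵢ eᵢ ⊗ eᵢ`. The Choi matrix of `Λ` is `(id ⊗ Λ)(ω ω*)`, and `ω ω*` is positive
semidefinite, so complete positivity gives a positive semidefinite Choi matrix `C`. Conversely,
every positive semidefinite `M` is a sum of rank-one matrices `v v*`, and `(id ⊗ Λ)(v v*)` is the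
congruence `V* C V` with `V = X ⊗ 1`, `X i a = conj (v (a, i))`; hence it is positive semidefinite.
-/

open scoped ComplexOrder Kronecker

open Matrix

namespace Matrix

theorem posSemidef_smul_iff {𝕜 n : Type*} [RCLike 𝕜] {c : 𝕜} (hc : 0 < c) {A : Matrix n n 𝕜} :
    (c • A).PosSemidef ↔ A.PosSemidef :=
  ⟨fun h => by simpa [smul_smul, hc.ne'] using h.smul (inv_pos.mpr hc).le, fun h => h.smul hc.le⟩

end Matrix

namespace LinearMap

variable {𝕜 : Type*} [RCLike 𝕜] {κ n m : Type*}

/-- `id_κ ⊗ Λ`. -/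
def ampliation (κ : Type*) (Λ : Matrix n n 𝕜 →ₗ[𝕜] Matrix m m 𝕜) :
    Matrix (κ × n) (κ × n) 𝕜 →ₗ[𝕜] Matrix (κ × m) (κ × m) 𝕜 :=
  (compLinearEquiv κ κ m m 𝕜 𝕜).toLinearMap ∘ₗ Λ.mapMatrix ∘ₗ
    (compLinearEquiv κ κ n n 𝕜 𝕜).symm.toLinearMap

theorem ampliation_apply (Λ : Matrix n n 𝕜 →ₗ[𝕜] Matrix m m 𝕜)
    (M : Matrix (κ × n) (κ × n) 𝕜) (p q : κ × m) :
    Λ.ampliation κ M p q = Λ (of fun i j => M (p.1, i) (q.1, j)) p.2 q.2 :=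
  rfl

def IsCompletelyPositive (Λ : Matrix n n 𝕜 →ₗ[𝕜] Matrix m m 𝕜) : Prop :=
  ∀ (k : ℕ) (M : Matrix (Fin k × n) (Fin k × n) 𝕜), M.PosSemidef →
    (Λ.ampliation (Fin k) M).PosSemidef

variable [DecidableEq n]

/-- Unnormalized: for `n = Fin d`, `(d : 𝕜)⁻¹ • Λ.choiMatrix` is `(id_d ⊗ Λ)[P⁺_d]`. -/
def choiMatrix (Λ : Matrix n n 𝕜 →ₗ[𝕜] Matrix m m 𝕜) : Matrix (n × m) (n × m) 𝕜 :=
  of fun p q => Λ (Matrix.single p.1 q.1 1) p.2 q.2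

theorem choiMatrix_eq_ampliation (Λ : Matrix n n 𝕜 →ₗ[𝕜] Matrix m m 𝕜) :
    Λ.choiMatrix = Λ.ampliation n
      (vecMulVec (fun p => (1 : Matrix n n 𝕜) p.1 p.2)
        (star fun p => (1 : Matrix n n 𝕜) p.1 p.2)) := by
  ext p q
  simp only [choiMatrix, ampliation_apply, of_apply]
  refine congrArg (fun A => Λ A p.2 q.2) ?_
  ext i j
  by_cases hi : p.1 = i <;> by_cases hj : q.1 = j <;> simp [vecMulVec_apply, one_apply, hi, hj]

variable [Fintype n] [DecidableEq m] [Fintype m]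

theorem ampliation_vecMulVec (Λ : Matrix n n 𝕜 →ₗ[𝕜] Matrix m m 𝕜) (v : κ × n → 𝕜) :
    Λ.ampliation κ (vecMulVec v (star v)) =
      ((of fun i a => star (v (a, i))) ⊗ₖ (1 : Matrix m m 𝕜))ᴴ * Λ.choiMatrix *
        ((of fun i a => star (v (a, i))) ⊗ₖ (1 : Matrix m m 𝕜)) := by
  have single_eq_smul (i j : n) (a : 𝕜) : Matrix.single i j a = a • Matrix.single i j (1 : 𝕜) := by
    rw [smul_single, smul_eq_mul, mul_one]
  ext p q
  rw [ampliation_apply, matrix_eq_sum_single (of fun i j => _)]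
  simp only [of_apply, vecMulVec_apply, single_eq_smul _ _ (_ * _), map_sum, map_smul,
    Matrix.sum_apply, Matrix.smul_apply, smul_eq_mul]
  simp only [Pi.star_apply, RCLike.star_def, choiMatrix, Matrix.mul_apply, conjTranspose_apply,
    kroneckerMap_apply, of_apply, one_apply, apply_ite, mul_one, mul_zero,
    RingHomCompTriple.comp_apply, RingHom.id_apply, star_zero, ite_mul, zero_mul,
    Fintype.sum_prod_type, Finset.sum_ite_eq', Finset.mem_univ, ↓reduceIte, Finset.sum_mul]
  rw [Finset.sum_comm]
  exact Finset.sum_congr rfl fun i _ => Finset.sum_congr rfl fun j _ => by ring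

theorem posSemidef_ampliation [Fintype κ] {Λ : Matrix n n 𝕜 →ₗ[𝕜] Matrix m m 𝕜}
    (hΛ : Λ.choiMatrix.PosSemidef) {M : Matrix (κ × n) (κ × n) 𝕜} (hM : M.PosSemidef) :
    (Λ.ampliation κ M).PosSemidef := by
  obtain ⟨r, v, rfl⟩ := posSemidef_iff_eq_sum_vecMulVec.mp hM
  rw [map_sum]
  exact posSemidef_sum _ fun i _ => ampliation_vecMulVec Λ (v i) ▸ hΛ.conjTranspose_mul_mul_same _

end LinearMap

theorem LinearMap.isCompletelyPositive_iff_posSemidef_choiMatrix {𝕜 : Type*} [RCLike 𝕜] {d : ℕ}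
    {m : Type*} [Fintype m] [DecidableEq m] (Λ : Matrix (Fin d) (Fin d) 𝕜 →ₗ[𝕜] Matrix m m 𝕜) :
    Λ.IsCompletelyPositive ↔ Λ.choiMatrix.PosSemidef := by
  refine ⟨fun hΛ => ?_, fun hΛ _ _ hM => posSemidef_ampliation hΛ hM⟩
  rw [choiMatrix_eq_ampliation]
  exact hΛ d _ (posSemidef_vecMulVec_self_star _)

theorem choi_theorem (n : ℕ)
    (Λ : Matrix (Fin n) (Fin n) ℂ →ₗ[ℂ] Matrix (Fin n) (Fin n) ℂ) :
    (∀ (k : ℕ) (M : Matrix (Fin k × Fin n) (Fin k × Fin n) ℂ), M.PosSemidef →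
        (Matrix.of fun p q : Fin k × Fin n =>
          (Λ (Matrix.of fun i j => M (p.1, i) (q.1, j))) p.2 q.2).PosSemidef) ↔
      (Matrix.of fun p q : Fin n × Fin n =>
        (n : ℂ)⁻¹ * (Λ (Matrix.single p.1 q.1 1)) p.2 q.2).PosSemidef := by
  refine Λ.isCompletelyPositive_iff_posSemidef_choiMatrix.trans ?_
  change _ ↔ ((n : ℂ)⁻¹ • Λ.choiMatrix).PosSemidef
  rcases n.eq_zero_or_pos with rfl | hn
  · rw [Subsingleton.elim Λ.choiMatrix 0, smul_zero]
  · exact (posSemidef_smul_iff (by positivity)).symm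
end

section
/- If a bipartite density matrix ρ₁₂ on ℂ^{d₁}⊗ℂ^{d₂} is separable, i.e. ρ₁₂ = Σ_i p_i ρ_i¹⊗ρ_i² with p_i ≥ 0, Σp_i = 1 and ρ_i¹, ρ_i² density matrices, then the realigned matrix ρ₁₂^R has trace norm at most 1. -/
open scoped ComplexOrder

open Matrix Kronecker

noncomputable def traceNorm {m n : Type*} [Fintype m] [Fintype n] [DecidableEq n]
    (A : Matrix m n ℂ) : ℝ :=
  ∑ i, Real.sqrt ((Matrix.isHermitian_conjTranspose_mul_self A).eigenvalues i)

noncomputable def realign {d : ℕ} (X : Matrix (Fin d × Fin d) (Fin d × Fin d) ℂ) :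
    Matrix (Fin d × Fin d) (Fin d × Fin d) ℂ :=
  Matrix.of fun p q => X (q.2, p.2) (q.1, p.1)

/-
Realignment turns a product `X ⊗ Y` into the rank-one matrix `vec Y · (vec X)ᵀ`, so `ρ^R` is a
sum of rank-one matrices `p_i vec ρ₂ᵢ · (vec ρ₁ᵢ)ᵀ`. The trace norm is dual to the operator norm:
if `e_j` are orthonormal eigenvectors of `AᴴA` with eigenvalues `σ_j²`, the matrix
`W = Σ_j e_j (A e_j / σ_j)ᴴ` is a contraction with `tr (W A) = Σ_j σ_j = ‖A‖₁`. Hence for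
`A = Σ_i u_i v_iᵀ` we get `‖A‖₁ ≤ Σ_i |v_iᵀ W u_i| ≤ Σ_i ‖u_i‖ ‖v_i‖`. Finally a density matrix
satisfies `‖vec ρ‖ ≤ tr ρ = 1`, since `|ρ_ab|² ≤ ρ_aa ρ_bb`, and the weights `p_i` sum to one.
-/

open WithLp InnerProductSpace

open scoped MatrixOrder in
theorem Matrix.PosSemidef.norm_apply_sq_le {n : Type*} [Fintype n] {M : Matrix n n ℂ}
    (hM : M.PosSemidef) (i j : n) : ‖M i j‖ ^ 2 ≤ (M i i).re * (M j j).re := by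
  classical
  obtain ⟨B, rfl⟩ := CStarAlgebra.nonneg_iff_eq_star_mul_self.mp hM.nonneg
  set c : n → EuclideanSpace ℂ n := fun i => toLp 2 fun k => B k i
  have hgram (i j : n) : (star B * B) i j = ⟪c i, c j⟫_ℂ := by
    simp [c, EuclideanSpace.inner_toLp_toLp, mul_apply, dotProduct, mul_comm]
  have hre (i : n) : (⟪c i, c i⟫_ℂ).re = ‖c i‖ ^ 2 := inner_self_eq_norm_sq (𝕜 := ℂ) (c i)
  rw [hgram, hgram, hgram, hre, hre, ← mul_pow]
  exact pow_le_pow_left₀ (norm_nonneg _) (norm_inner_le_norm (c i) (c j)) 2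

theorem Matrix.PosSemidef.norm_vec_le_re_trace {n : Type*} [Fintype n] {M : Matrix n n ℂ}
    (hM : M.PosSemidef) : ‖toLp 2 (vec M)‖ ≤ M.trace.re := by
  have htr : 0 ≤ M.trace.re := by simpa using Complex.re_le_re hM.trace_nonneg
  refine le_of_sq_le_sq ?_ htr
  rw [EuclideanSpace.norm_sq_eq]
  calc ∑ p, ‖vec M p‖ ^ 2 ≤ ∑ p : n × n, (M p.1 p.1).re * (M p.2 p.2).re :=
        Finset.sum_le_sum fun p _ => by simpa [mul_comm] using hM.norm_apply_sq_le p.2 p.1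
    _ = M.trace.re ^ 2 := by
        simp [Fintype.sum_prod_type, trace, sq, Finset.sum_mul_sum]

theorem sum_norm_inner_sq_le_of_orthonormal_subtype {ι 𝕜 E : Type*} [Fintype ι] [RCLike 𝕜]
    [NormedAddCommGroup E] [InnerProductSpace 𝕜 E] {f : ι → E} {P : ι → Prop} [DecidablePred P]
    (hf : Orthonormal 𝕜 fun j : {j // P j} => f j) (hf₀ : ∀ j, ¬P j → f j = 0) (x : E) :
    ∑ j, ‖⟪f j, x⟫_𝕜‖ ^ 2 ≤ ‖x‖ ^ 2 := by
  rw [← Fintype.sum_subtype_add_sum_subtype P]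
  have hzero (j : {j // ¬P j}) : f j = 0 := hf₀ j j.2
  simpa [hzero] using hf.sum_inner_products_le (s := Finset.univ) x

section TraceNorm

variable {m n : Type*} [Fintype m] [Fintype n]

theorem norm_trace_mul_vecMulVec_le {W : Matrix n m ℂ}
    (hW : ∀ x : m → ℂ, ‖toLp 2 (W *ᵥ x)‖ ≤ ‖toLp 2 x‖) (u : m → ℂ) (v : n → ℂ) :
    ‖(W * vecMulVec u v).trace‖ ≤ ‖toLp 2 u‖ * ‖toLp 2 v‖ := by
  have hstar : ‖toLp 2 (star v)‖ = ‖toLp 2 v‖ := by simp [EuclideanSpace.norm_eq]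
  calc ‖(W * vecMulVec u v).trace‖ = ‖⟪toLp 2 (star v), toLp 2 (W *ᵥ u)⟫_ℂ‖ := by
        rw [mul_vecMulVec, trace_vecMulVec, EuclideanSpace.inner_toLp_toLp, star_star]
    _ ≤ ‖toLp 2 (star v)‖ * ‖toLp 2 (W *ᵥ u)‖ := norm_inner_le_norm _ _
    _ ≤ ‖toLp 2 u‖ * ‖toLp 2 v‖ := by
        rw [hstar, mul_comm]; gcongr; exact hW u

variable [DecidableEq n] {A : Matrix m n ℂ}

theorem inner_mulVec_eigenvectorBasis (hA : (Aᴴ * A).IsHermitian) (j k : n) :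
    ⟪toLp 2 (A *ᵥ hA.eigenvectorBasis j), toLp 2 (A *ᵥ hA.eigenvectorBasis k)⟫_ℂ =
      if j = k then (hA.eigenvalues j : ℂ) else 0 := by
  have hb := orthonormal_iff_ite.mp hA.eigenvectorBasis.orthonormal j k
  rw [EuclideanSpace.inner_eq_star_dotProduct] at hb
  rw [EuclideanSpace.inner_toLp_toLp, dotProduct_comm, star_mulVec, ← dotProduct_mulVec,
    mulVec_mulVec, hA.mulVec_eigenvectorBasis, dotProduct_smul, dotProduct_comm, hb]
  split_ifs with h <;> simp [h, Complex.real_smul]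

theorem exists_contraction_trace_mul_eq_traceNorm (A : Matrix m n ℂ) :
    ∃ W : Matrix n m ℂ, (∀ x : m → ℂ, ‖toLp 2 (W *ᵥ x)‖ ≤ ‖toLp 2 x‖) ∧
      (W * A).trace = traceNorm A := by
  set hA := isHermitian_conjTranspose_mul_self A
  set σ : n → ℝ := fun j => Real.sqrt (hA.eigenvalues j)
  have hσ (j : n) : (hA.eigenvalues j : ℂ) = σ j ^ 2 := by
    exact_mod_cast (Real.sq_sqrt (eigenvalues_conjTranspose_mul_self_nonneg A j)).symm
  -- `σ j = 0` gives `f j = 0` (as `0⁻¹ = 0`), so `f` is orthonormal exactly on the support of `σ`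
  set f : n → EuclideanSpace ℂ m := fun j => (σ j : ℂ)⁻¹ • toLp 2 (A *ᵥ hA.eigenvectorBasis j)
  have hf : Orthonormal ℂ fun j : {j // σ j ≠ 0} => f j := by
    refine orthonormal_iff_ite.mpr fun j k => ?_
    simp only [f, inner_smul_left, inner_smul_right, inner_mulVec_eigenvectorBasis hA, hσ,
      Subtype.ext_iff]
    split_ifs with h
    · have hk : (σ k : ℂ) ≠ 0 := by exact_mod_cast k.2
      rw [h]
      simp only [Complex.conj_ofReal, map_inv₀]
      field_simp
    · simp
  have hbessel (x : EuclideanSpace ℂ m) : ∑ j, ‖⟪f j, x⟫_ℂ‖ ^ 2 ≤ ‖x‖ ^ 2 :=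
    sum_norm_inner_sq_le_of_orthonormal_subtype hf (fun j hj => by simp [f, not_not.mp hj]) x
  refine ⟨∑ j, vecMulVec (hA.eigenvectorBasis j) (star (f j)), fun x => ?_, ?_⟩
  · have hW : toLp 2 ((∑ j, vecMulVec (hA.eigenvectorBasis j) (star (f j))) *ᵥ x) =
        hA.eigenvectorBasis.repr.symm (toLp 2 fun j => ⟪f j, toLp 2 x⟫_ℂ) := by
      rw [← hA.eigenvectorBasis.sum_repr_symm]
      ext
      simp [Matrix.sum_mulVec, vecMulVec_mulVec, EuclideanSpace.inner_eq_star_dotProduct,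
        dotProduct_comm, mul_comm]
    rw [hW, LinearIsometryEquiv.norm_map, ← pow_le_pow_iff_left₀ (norm_nonneg _) (norm_nonneg _)
      two_ne_zero, EuclideanSpace.norm_sq_eq]
    exact hbessel _
  · have hterm (j : n) : (hA.eigenvectorBasis j : n → ℂ) ⬝ᵥ (star (f j) ᵥ* A) = σ j := by
      calc _ = ⟪f j, toLp 2 (A *ᵥ hA.eigenvectorBasis j)⟫_ℂ := by
            rw [dotProduct_comm, ← dotProduct_mulVec, dotProduct_comm]; rfl
        _ = σ j := by
            rw [inner_smul_left, inner_mulVec_eigenvectorBasis hA, if_pos rfl, hσ, map_inv₀,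
              Complex.conj_ofReal]
            rcases eq_or_ne (σ j : ℂ) 0 with h | h
            · simp [h]
            · field_simp
    simp only [Matrix.sum_mul, trace_sum, vecMulVec_mul, trace_vecMulVec, hterm]
    rw [traceNorm, Complex.ofReal_sum]

theorem traceNorm_sum_vecMulVec_le {ι : Type*} (s : Finset ι) (u : ι → m → ℂ) (v : ι → n → ℂ) :
    traceNorm (∑ i ∈ s, vecMulVec (u i) (v i)) ≤ ∑ i ∈ s, ‖toLp 2 (u i)‖ * ‖toLp 2 (v i)‖ := by
  obtain ⟨W, hW, htr⟩ := exists_contraction_trace_mul_eq_traceNorm (∑ i ∈ s, vecMulVec (u i) (v i))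
  calc traceNorm (∑ i ∈ s, vecMulVec (u i) (v i))
      = (W * ∑ i ∈ s, vecMulVec (u i) (v i)).trace.re := by rw [htr, Complex.ofReal_re]
    _ ≤ ‖(W * ∑ i ∈ s, vecMulVec (u i) (v i)).trace‖ := Complex.re_le_norm _
    _ = ‖∑ i ∈ s, (W * vecMulVec (u i) (v i)).trace‖ := by rw [Matrix.mul_sum, trace_sum]
    _ ≤ ∑ i ∈ s, ‖(W * vecMulVec (u i) (v i)).trace‖ := norm_sum_le _ _
    _ ≤ ∑ i ∈ s, ‖toLp 2 (u i)‖ * ‖toLp 2 (v i)‖ :=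
        Finset.sum_le_sum fun i _ => norm_trace_mul_vecMulVec_le hW _ _

end TraceNorm

section Realignment

variable {d : ℕ}

theorem realign_sum {ι : Type*} (s : Finset ι) (X : ι → Matrix (Fin d × Fin d) (Fin d × Fin d) ℂ) :
    realign (∑ i ∈ s, X i) = ∑ i ∈ s, realign (X i) := by
  ext p q
  simp [realign, Matrix.sum_apply]

theorem realign_smul (c : ℂ) (X : Matrix (Fin d × Fin d) (Fin d × Fin d) ℂ) :
    realign (c • X) = c • realign X := rfl

theorem realign_kronecker (X Y : Matrix (Fin d) (Fin d) ℂ) :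
    realign (X ⊗ₖ Y) = vecMulVec (vec Y) (vec X) := by
  ext p q
  simp [realign, vecMulVec, mul_comm]

end Realignment

theorem realignment_criterion (d k : ℕ)
    (p : Fin k → ℝ) (hp : ∀ i, 0 ≤ p i) (hpsum : ∑ i, p i = 1)
    (ρ₁ ρ₂ : Fin k → Matrix (Fin d) (Fin d) ℂ)
    (h₁ : ∀ i, (ρ₁ i).PosSemidef ∧ (ρ₁ i).trace = 1)
    (h₂ : ∀ i, (ρ₂ i).PosSemidef ∧ (ρ₂ i).trace = 1)
    (ρ : Matrix (Fin d × Fin d) (Fin d × Fin d) ℂ)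
    (hρ : ρ = ∑ i, (p i : ℂ) • (ρ₁ i ⊗ₖ ρ₂ i)) :
    traceNorm (realign ρ) ≤ 1 := by
  have hvec {M : Matrix (Fin d) (Fin d) ℂ} (hM : M.PosSemidef ∧ M.trace = 1) :
      ‖toLp 2 (vec M)‖ ≤ 1 := by
    simpa [hM.2] using hM.1.norm_vec_le_re_trace
  calc traceNorm (realign ρ)
      = traceNorm (∑ i, vecMulVec ((p i : ℂ) • vec (ρ₂ i)) (vec (ρ₁ i))) := by
        rw [hρ, realign_sum]
        simp only [realign_smul, realign_kronecker, smul_vecMulVec]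
    _ ≤ ∑ i, ‖toLp 2 ((p i : ℂ) • vec (ρ₂ i))‖ * ‖toLp 2 (vec (ρ₁ i))‖ :=
        traceNorm_sum_vecMulVec_le _ _ _
    _ ≤ ∑ i, p i := by
        gcongr with i
        rw [WithLp.toLp_smul, norm_smul, Complex.norm_real, Real.norm_of_nonneg (hp i)]
        calc p i * ‖toLp 2 (vec (ρ₂ i))‖ * ‖toLp 2 (vec (ρ₁ i))‖
            ≤ p i * ‖toLp 2 (vec (ρ₂ i))‖ :=
              mul_le_of_le_one_right (mul_nonneg (hp i) (norm_nonneg _)) (hvec (h₁ i))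
          _ ≤ p i := mul_le_of_le_one_right (hp i) (hvec (h₂ i))
    _ = 1 := hpsum
end

section
/- Any set of 5 mutually anticommuting Pauli tensor products σ_{αβ} = σ_α⊗σ_β on ℂ⁴ must be of the form {σ_{0i}, σ_{0j}, σ_{1k}, σ_{2k}, σ_{3k}} or {σ_{i0}, σ_{j0}, σ_{k1}, σ_{k2}, σ_{k3}} with i, j, k a permutation-compatible triple, i.e. the antisymmetric tensor ε_{ijk} ≠ 0. -/
/-! Two Pauli matrices anticommute exactly when both are non-trivial and distinct, and commute
otherwise. Hence `σ_{αβ} σ_{γδ} = s • σ_{γδ} σ_{αβ}` where `s = ±1` is the product of the signs of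
the two factor pairs, and since every `σ_{αβ}` squares to `1`, anticommuting means `s = -1`, i.e.
exactly one factor pair anticommutes. What remains is a finite statement about index pairs: those
with a trivial factor all have it on the same side, those without one share a common index (so
there are at most three), and the former must avoid that index; five pairs force the two shapes. -/

open Matrix Kronecker

noncomputable def pauli : Fin 4 → Matrix (Fin 2) (Fin 2) ℂ :=
  ![1, !![0, 1; 1, 0], !![0, -Complex.I; Complex.I, 0], !![1, 0; 0, -1]]

noncomputable def sigma2 (a b : Fin 4) : Matrix (Fin 2 × Fin 2) (Fin 2 × Fin 2) ℂ :=
  pauli a ⊗ₖ pauli b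

def PauliAnticomm (a c : Fin 4) : Prop := a ≠ 0 ∧ c ≠ 0 ∧ a ≠ c

instance : DecidableRel PauliAnticomm := fun _ _ => inferInstanceAs (Decidable (_ ∧ _ ∧ _))

noncomputable def pauliSign (a c : Fin 4) : ℂ := if PauliAnticomm a c then -1 else 1

lemma pauliSign_mul_pauliSign_eq_neg_one_iff (a b c d : Fin 4) :
    pauliSign a c * pauliSign b d = -1 ↔ Xor (PauliAnticomm a c) (PauliAnticomm b d) := by
  unfold pauliSign Xor
  split_ifs <;> norm_num [*]

lemma pauli_mul_self (a : Fin 4) : pauli a * pauli a = 1 := by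
  fin_cases a <;> simp [pauli, ← Matrix.one_fin_two]

lemma pauli_mul_eq_pauliSign_smul (a c : Fin 4) :
    pauli a * pauli c = pauliSign a c • (pauli c * pauli a) := by
  fin_cases a <;> fin_cases c <;> simp [pauli, pauliSign, PauliAnticomm]

theorem Matrix.kronecker_mul_kronecker_eq_smul {R l m : Type*} [CommRing R] [Fintype l]
    [Fintype m] {A C : Matrix l l R} {B D : Matrix m m R} {s t : R}
    (hAC : A * C = s • (C * A)) (hBD : B * D = t • (D * B)) :
    (A ⊗ₖ B) * (C ⊗ₖ D) = (s * t) • ((C ⊗ₖ D) * (A ⊗ₖ B)) := by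
  rw [← mul_kronecker_mul, ← mul_kronecker_mul, hAC, hBD, smul_kronecker, kronecker_smul,
    smul_smul]

lemma sigma2_mul_self (a b : Fin 4) : sigma2 a b * sigma2 a b = 1 := by
  rw [sigma2, ← mul_kronecker_mul, pauli_mul_self, pauli_mul_self, one_kronecker_one]

lemma sigma2_mul_ne_zero (a b c d : Fin 4) : sigma2 a b * sigma2 c d ≠ 0 := by
  intro h
  have : sigma2 a b * sigma2 c d * (sigma2 c d * sigma2 a b) = 1 := by
    rw [Matrix.mul_assoc, ← Matrix.mul_assoc (sigma2 c d), sigma2_mul_self, Matrix.one_mul,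
      sigma2_mul_self]
  simp [h] at this

lemma sigma2_mul_sigma2 (a b c d : Fin 4) :
    sigma2 a b * sigma2 c d = (pauliSign a c * pauliSign b d) • (sigma2 c d * sigma2 a b) :=
  kronecker_mul_kronecker_eq_smul (pauli_mul_eq_pauliSign_smul a c)
    (pauli_mul_eq_pauliSign_smul b d)

lemma xor_pauliAnticomm_of_sigma2_anticomm {a b c d : Fin 4}
    (h : sigma2 a b * sigma2 c d = -(sigma2 c d * sigma2 a b)) :
    Xor (PauliAnticomm a c) (PauliAnticomm b d) := by
  rw [sigma2_mul_sigma2, ← neg_one_smul ℂ (sigma2 c d * sigma2 a b)] at h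
  exact (pauliSign_mul_pauliSign_eq_neg_one_iff a b c d).1 <|
    smul_left_injective ℂ (sigma2_mul_ne_zero c d a b) h

def PauliPairAnticomm (p q : Fin 4 × Fin 4) : Prop :=
  Xor (PauliAnticomm p.1 q.1) (PauliAnticomm p.2 q.2)

instance : DecidableRel PauliPairAnticomm := fun _ _ => inferInstanceAs (Decidable (Xor _ _))

set_option maxRecDepth 10000 in
lemma classification_of_five_pairwise_anticomm : ∀ v₀ v₁ : Fin 4 × Fin 4,
    PauliPairAnticomm v₀ v₁ → ∀ v₂, PauliPairAnticomm v₀ v₂ → PauliPairAnticomm v₁ v₂ →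
    ∀ v₃, PauliPairAnticomm v₀ v₃ → PauliPairAnticomm v₁ v₃ → PauliPairAnticomm v₂ v₃ →
    ∀ v₄, PauliPairAnticomm v₀ v₄ → PauliPairAnticomm v₁ v₄ → PauliPairAnticomm v₂ v₄ →
      PauliPairAnticomm v₃ v₄ →
    ∃ i j k : Fin 4, i ≠ 0 ∧ j ≠ 0 ∧ k ≠ 0 ∧ i ≠ j ∧ j ≠ k ∧ i ≠ k ∧
      (({v₀, v₁, v₂, v₃, v₄} : Finset (Fin 4 × Fin 4)) =
          {(0, i), (0, j), (1, k), (2, k), (3, k)} ∨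
        ({v₀, v₁, v₂, v₃, v₄} : Finset (Fin 4 × Fin 4)) =
          {(i, 0), (j, 0), (k, 1), (k, 2), (k, 3)}) := by
  decide

theorem five_anticommuting_pauli_classification_general (f : Fin 5 → Fin 4 × Fin 4)
    (hanti : ∀ i j : Fin 5, i ≠ j →
      sigma2 (f i).1 (f i).2 * sigma2 (f j).1 (f j).2 =
        -(sigma2 (f j).1 (f j).2 * sigma2 (f i).1 (f i).2)) :
    ∃ i j k : Fin 4, i ≠ 0 ∧ j ≠ 0 ∧ k ≠ 0 ∧ i ≠ j ∧ j ≠ k ∧ i ≠ k ∧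
      (Set.range f =
          ({((0 : Fin 4), i), ((0 : Fin 4), j), (1, k), (2, k), (3, k)} :
            Set (Fin 4 × Fin 4)) ∨
        Set.range f =
          ({(i, (0 : Fin 4)), (j, (0 : Fin 4)), (k, 1), (k, 2), (k, 3)} :
            Set (Fin 4 × Fin 4))) := by
  have h (p q : Fin 5) (hpq : p ≠ q) : PauliPairAnticomm (f p) (f q) :=
    xor_pauliAnticomm_of_sigma2_anticomm (hanti p q hpq)
  obtain ⟨i, j, k, hi, hj, hk, hij, hjk, hik, hs⟩ := classification_of_five_pairwise_anticomm
    (f 0) (f 1) (h 0 1 (by decide)) (f 2) (h 0 2 (by decide)) (h 1 2 (by decide))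
    (f 3) (h 0 3 (by decide)) (h 1 3 (by decide)) (h 2 3 (by decide))
    (f 4) (h 0 4 (by decide)) (h 1 4 (by decide)) (h 2 4 (by decide)) (h 3 4 (by decide))
  have hrange : Set.range f = ↑({f 0, f 1, f 2, f 3, f 4} : Finset (Fin 4 × Fin 4)) := by
    ext x
    simp [Fin.exists_fin_succ, eq_comm]
  refine ⟨i, j, k, hi, hj, hk, hij, hjk, hik, ?_⟩
  rw [hrange]
  rcases hs with hs | hs <;> simp [hs]

theorem five_anticommuting_pauli_classification (f : Fin 5 → Fin 4 × Fin 4)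
    (hinj : Function.Injective f)
    (hanti : ∀ i j : Fin 5, i ≠ j →
      sigma2 (f i).1 (f i).2 * sigma2 (f j).1 (f j).2 =
        -(sigma2 (f j).1 (f j).2 * sigma2 (f i).1 (f i).2)) :
    ∃ i j k : Fin 4, i ≠ 0 ∧ j ≠ 0 ∧ k ≠ 0 ∧ i ≠ j ∧ j ≠ k ∧ i ≠ k ∧
      (Set.range f =
          ({((0 : Fin 4), i), ((0 : Fin 4), j), (1, k), (2, k), (3, k)} :
            Set (Fin 4 × Fin 4)) ∨
        Set.range f =
          ({(i, (0 : Fin 4)), (j, (0 : Fin 4)), (k, 1), (k, 2), (k, 3)} :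
            Set (Fin 4 × Fin 4))) :=
  five_anticommuting_pauli_classification_general f hanti
end

section
/- If a linear map Λ = Σ_{μ,ν} λ_{μν} S_{μν} on M_{2ⁿ}(ℂ) (with S_{μν}(X) = σ_μ X σ_ν over multi-indexed tensor products of Pauli matrices) is positive, then the diagonal map Λ_diag = Σ_μ λ_{μμ} S_{μμ} is also positive. -/
open scoped ComplexOrder

open Matrix

/-- Tensor product of `n` Pauli matrices, indexed by a multi-index. -/
noncomputable def pauliVec {n : ℕ} (μ : Fin n → Fin 4) :
    Matrix (Fin n → Fin 2) (Fin n → Fin 2) ℂ :=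
  Matrix.of fun x y => ∏ i, pauli (μ i) (x i) (y i)

/-!
Conjugation by a Pauli string `σ_δ` multiplies each `σ_μ` by a sign `ε_δ(μ) = ±1`, so the
twirled map `X ↦ σ_δ Λ(σ_δ X σ_δ) σ_δ`, which is positive because `σ_δ` is Hermitian, has
coefficients `ε_δ(μ) ε_δ(ν) λ_{μν}`. The sign vectors `δ ↦ ε_δ(μ)` are orthogonal, so the sum of
all `4ⁿ` twirls is `4ⁿ Λ_diag`.
-/

lemma of_prod_mul_of_prod {ι l m p R : Type*} [Fintype ι] [DecidableEq ι] [Fintype m]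
    [CommSemiring R] (A : ι → Matrix l m R) (B : ι → Matrix m p R) :
    (of fun (x : ι → l) (y : ι → m) => ∏ i, A i (x i) (y i)) *
        (of fun (x : ι → m) (y : ι → p) => ∏ i, B i (x i) (y i)) =
      of fun x y => ∏ i, (A i * B i) (x i) (y i) := by
  ext x y
  simp only [mul_apply, of_apply, ← Finset.prod_mul_distrib]
  exact (Fintype.prod_sum fun i k => A i (x i) k * B i k (y i)).symm

lemma conjTranspose_of_prod {ι m p R : Type*} [Fintype ι] [CommSemiring R] [StarRing R]
    (A : ι → Matrix m p R) :
    (of fun (x : ι → m) (y : ι → p) => ∏ i, A i (x i) (y i))ᴴ =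
      of fun x y => ∏ i, (A i)ᴴ (x i) (y i) := by
  ext x y
  simp [conjTranspose_apply]

/-- `+1` if `σ_d` and `σ_m` commute, `-1` if they anticommute. -/
def pauliCommSign (d m : Fin 4) : ℂ :=
  if d = 0 ∨ m = 0 ∨ d = m then 1 else -1

lemma pauli_mul_mul_self (d m : Fin 4) :
    pauli d * pauli m * pauli d = pauliCommSign d m • pauli m := by
  fin_cases d <;> fin_cases m <;>
    · ext i j
      fin_cases i <;> fin_cases j <;>
        simp [pauli, pauliCommSign, mul_apply, Fin.sum_univ_succ, one_apply]

lemma conjTranspose_pauli (d : Fin 4) : (pauli d)ᴴ = pauli d := by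
  fin_cases d <;>
    · ext i j
      fin_cases i <;> fin_cases j <;>
        simp [pauli, conjTranspose_apply, one_apply]

lemma sum_pauliCommSign_mul (m k : Fin 4) :
    ∑ d, pauliCommSign d m * pauliCommSign d k = if m = k then 4 else 0 := by
  fin_cases m <;> fin_cases k <;> norm_num +decide [pauliCommSign, Fin.sum_univ_four]

section PauliVec

variable {n : ℕ}

def pauliVecCommSign (δ μ : Fin n → Fin 4) : ℂ :=
  ∏ i, pauliCommSign (δ i) (μ i)

lemma pauliVec_mul_mul_self (δ μ : Fin n → Fin 4) :
    pauliVec δ * pauliVec μ * pauliVec δ = pauliVecCommSign δ μ • pauliVec μ := by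
  ext x y
  simp only [pauliVec, of_prod_mul_of_prod, pauli_mul_mul_self]
  simp [pauliVecCommSign, Finset.prod_mul_distrib]

lemma conjTranspose_pauliVec (δ : Fin n → Fin 4) : (pauliVec δ)ᴴ = pauliVec δ := by
  simp only [pauliVec, conjTranspose_of_prod, conjTranspose_pauli]

lemma sum_pauliVecCommSign_mul (μ ν : Fin n → Fin 4) :
    ∑ δ, pauliVecCommSign δ μ * pauliVecCommSign δ ν = if μ = ν then 4 ^ n else 0 := by
  simp only [pauliVecCommSign, ← Finset.prod_mul_distrib,
    ← Fintype.prod_sum fun i d => pauliCommSign d (μ i) * pauliCommSign d (ν i),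
    sum_pauliCommSign_mul]
  split_ifs with h
  · simp [h]
  · obtain ⟨i, hi⟩ := Function.ne_iff.mp h
    exact Finset.prod_eq_zero (Finset.mem_univ i) (if_neg hi)

lemma Matrix.PosSemidef.pauliVec_mul_mul_pauliVec {X : Matrix (Fin n → Fin 2) (Fin n → Fin 2) ℂ}
    (hX : X.PosSemidef) (δ : Fin n → Fin 4) : (pauliVec δ * X * pauliVec δ).PosSemidef := by
  simpa only [conjTranspose_pauliVec] using hX.mul_mul_conjTranspose_same (pauliVec δ)

lemma pauliVec_conj_mul_mul_conj (δ μ ν : Fin n → Fin 4)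
    (X : Matrix (Fin n → Fin 2) (Fin n → Fin 2) ℂ) :
    pauliVec δ * (pauliVec μ * (pauliVec δ * X * pauliVec δ) * pauliVec ν) * pauliVec δ =
      (pauliVecCommSign δ μ * pauliVecCommSign δ ν) • (pauliVec μ * X * pauliVec ν) := by
  calc _ = (pauliVec δ * pauliVec μ * pauliVec δ) * X *
        (pauliVec δ * pauliVec ν * pauliVec δ) := by noncomm_ring
    _ = _ := by
      simp only [pauliVec_mul_mul_self, Matrix.smul_mul, Matrix.mul_smul, smul_smul, mul_comm]

lemma sum_pauliVec_twirl (l : (Fin n → Fin 4) → (Fin n → Fin 4) → ℂ)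
    (X : Matrix (Fin n → Fin 2) (Fin n → Fin 2) ℂ) :
    ∑ δ, pauliVec δ * (∑ μ, ∑ ν, l μ ν • (pauliVec μ * (pauliVec δ * X * pauliVec δ) *
      pauliVec ν)) * pauliVec δ = (4 : ℂ) ^ n • ∑ μ, l μ μ • (pauliVec μ * X * pauliVec μ) := by
  simp only [Finset.mul_sum, Finset.sum_mul, Matrix.mul_smul, Matrix.smul_mul,
    pauliVec_conj_mul_mul_conj, smul_smul]
  rw [Finset.sum_comm]
  refine ((Finset.sum_congr rfl fun μ _ => Finset.sum_comm).trans ?_).trans Finset.smul_sum.symm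
  refine Finset.sum_congr rfl fun μ _ => ?_
  simp only [← Finset.sum_smul, ← Finset.mul_sum, sum_pauliVecCommSign_mul, mul_ite, mul_zero,
    ite_smul, zero_smul, Finset.sum_ite_eq, Finset.mem_univ, if_true]
  rw [smul_smul, mul_comm]

end PauliVec

theorem diagonal_of_positive_is_positive (n : ℕ)
    (l : (Fin n → Fin 4) → (Fin n → Fin 4) → ℂ)
    (hpos : ∀ X : Matrix (Fin n → Fin 2) (Fin n → Fin 2) ℂ, X.PosSemidef →
      (∑ μ : Fin n → Fin 4, ∑ ν : Fin n → Fin 4,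
          l μ ν • (pauliVec μ * X * pauliVec ν)).PosSemidef) :
    ∀ X : Matrix (Fin n → Fin 2) (Fin n → Fin 2) ℂ, X.PosSemidef →
      (∑ μ : Fin n → Fin 4, l μ μ • (pauliVec μ * X * pauliVec μ)).PosSemidef := by
  intro X hX
  have htwirl : ((4 : ℂ) ^ n • ∑ μ, l μ μ • (pauliVec μ * X * pauliVec μ)).PosSemidef := by
    rw [← sum_pauliVec_twirl]
    exact posSemidef_sum _ fun δ _ =>
      (hpos _ (hX.pauliVec_mul_mul_pauliVec δ)).pauliVec_mul_mul_pauliVec δ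
  simpa only [inv_smul_smul₀ (pow_ne_zero n (four_ne_zero : (4 : ℂ) ≠ 0))] using
    htwirl.smul (a := ((4 : ℂ) ^ n)⁻¹) (by positivity)
end
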